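/- arXiv:2404.02635 — 3 statements merged into one kernel-verified Lean document; each statement's English description precedes it below -/
import Mathlib

section
/- Let f : ℝⁿ → ℝ be differentiable at x₀, φ : ℝⁿ → ℝ be convex, and let G be a symmetric n×n real matrix with ⟨d, G d⟩ ≥ μ‖d‖² for all d ∈ ℝⁿ, where μ > 0. Define q̂(x) := f(x₀) + ⟨∇f(x₀), x − x₀⟩ + (1/2)⟨x − x₀, G(x − x₀)⟩ + φ(x) and let x̄ be its (unique) minimizer over ℝⁿ. Then ⟨∇f(x₀), x̄ − x₀⟩ + φ(x̄) − φ(x₀) ≤ −⟨x̄ − x₀, G(x̄ − x₀)⟩, and consequently, with F := f + φ, it holds that F(x₀) − q̂(x̄) ≥ (1/2)⟨x̄ − x₀, G(x̄ − x₀)⟩ ≥ (μ/2)‖x̄ − x₀‖². -/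
open scoped RealInnerProductSpace

noncomputable section

/-- Let `x̄` be the (unique) minimizer of
`q̂(y) = f(x₀) + ⟨∇f(x₀), y − x₀⟩ + (1/2)⟨y − x₀, G(y − x₀)⟩ + φ(y)`, where `G` is symmetric
and `μ`-coercive with `μ > 0` and `φ` is convex. Then
`⟨∇f(x₀), x̄ − x₀⟩ + φ(x̄) − φ(x₀) ≤ −⟨x̄ − x₀, G(x̄ − x₀)⟩` and, with `F := f + φ`,
`F(x₀) − q̂(x̄) ≥ (1/2)⟨x̄ − x₀, G(x̄ − x₀)⟩ ≥ (μ/2)‖x̄ − x₀‖²`. -/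
theorem stmt_2 {n : ℕ} (f φ : EuclideanSpace ℝ (Fin n) → ℝ)
    (hφ : ConvexOn ℝ Set.univ φ)
    (x₀ : EuclideanSpace ℝ (Fin n)) (g : EuclideanSpace ℝ (Fin n))
    (hf : HasGradientAt f g x₀)
    (G : EuclideanSpace ℝ (Fin n) →L[ℝ] EuclideanSpace ℝ (Fin n))
    (hGsym : ∀ u v, ⟪G u, v⟫ = ⟪u, G v⟫)
    (μ : ℝ) (hμ : 0 < μ) (hGcoer : ∀ d, μ * ‖d‖ ^ 2 ≤ ⟪d, G d⟫)
    (qhat : EuclideanSpace ℝ (Fin n) → ℝ)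
    (hqhat : ∀ y, qhat y = f x₀ + ⟪g, y - x₀⟫ + (1 / 2) * ⟪y - x₀, G (y - x₀)⟫ + φ y)
    (xbar : EuclideanSpace ℝ (Fin n)) (hxbar : ∀ y, qhat xbar ≤ qhat y) :
    ⟪g, xbar - x₀⟫ + φ xbar - φ x₀ ≤ -⟪xbar - x₀, G (xbar - x₀)⟫ ∧
    (1 / 2) * ⟪xbar - x₀, G (xbar - x₀)⟫ ≤ (f x₀ + φ x₀) - qhat xbar ∧
    (μ / 2) * ‖xbar - x₀‖ ^ 2 ≤ (1 / 2) * ⟪xbar - x₀, G (xbar - x₀)⟫ := by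
  set d := xbar - x₀ with hd
  set A : ℝ := ⟪g, d⟫ + φ xbar - φ x₀ with hA
  set B : ℝ := ⟪d, G d⟫ with hB
  have hB0 : 0 ≤ B := le_trans (by positivity) (hGcoer d)
  have key : ∀ t : ℝ, t ∈ Set.Ioo (0:ℝ) 1 → A + ((1 + t) / 2) * B ≤ 0 := by
    intro t ht
    obtain ⟨ht0, ht1⟩ := ht
    have h1 := hxbar (x₀ + t • d)
    rw [hqhat, hqhat] at h1
    have hsub : (x₀ + t • d) - x₀ = t • d := by abel
    rw [hsub] at h1
    have hGsmul : G (t • d) = t • G d := G.map_smul t d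
    rw [← hd] at h1
    simp only [hGsmul, real_inner_smul_left, real_inner_smul_right] at h1
    have hconv := hφ.2 (Set.mem_univ x₀) (Set.mem_univ xbar)
      (by linarith : (0:ℝ) ≤ 1 - t) (le_of_lt ht0) (by ring)
    have heq : (1 - t) • x₀ + t • xbar = x₀ + t • d := by
      rw [hd]; module
    rw [heq] at hconv
    simp only [smul_eq_mul] at hconv
    have h3 : (1 - t) * (A + ((1 + t) / 2) * B) ≤ (1 - t) * 0 := by
      rw [hA, hB, mul_zero]
      nlinarith [h1, hconv]
    exact le_of_mul_le_mul_left (by linarith [h3]) (by linarith : (0:ℝ) < 1 - t) |>.trans_eq rfl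
  have hAB : A + B ≤ 0 := by
    have htend : Filter.Tendsto (fun t : ℝ => A + ((1 + t) / 2) * B)
        (nhdsWithin 1 (Set.Ioo (0:ℝ) 1)) (nhds (A + B)) := by
      have hc : Continuous (fun t : ℝ => A + ((1 + t) / 2) * B) :=
        continuous_const.add (((continuous_const.add continuous_id).div_const 2).mul
          continuous_const)
      have := hc.tendsto 1
      simp only [show A + ((1 + (1:ℝ)) / 2) * B = A + B by ring] at this
      exact this.mono_left nhdsWithin_le_nhds
    have hne : (nhdsWithin (1:ℝ) (Set.Ioo (0:ℝ) 1)).NeBot := by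
      apply mem_closure_iff_nhdsWithin_neBot.mp
      rw [closure_Ioo (by norm_num : (0:ℝ) ≠ 1)]
      exact ⟨by norm_num, le_refl 1⟩
    exact le_of_tendsto htend (Filter.eventually_of_mem self_mem_nhdsWithin key)
  refine ⟨by linarith [hAB], ?_, ?_⟩
  · rw [hqhat, ← hd]
    linarith [hAB]
  · linarith [hGcoer d]
end
end

section
/- Let φ : ℝⁿ → ℝ be convex, f : ℝⁿ → ℝ be differentiable at x, and let G be a symmetric n×n real matrix with ⟨d, G d⟩ ≥ μ‖d‖² for all d ∈ ℝⁿ, where μ > 0. Let x̂ ∈ ℝⁿ, d := x̂ − x, r(x) := x − prox_φ(x − ∇f(x)), and R(x̂) := x̂ − prox_φ(x̂ − ∇f(x) − G d). If ‖R(x̂)‖ ≤ θ‖r(x)‖ for some θ ∈ (0,1), then (μ / ((1 + ‖G‖)(1 + θ)))·‖d‖ ≤ ‖r(x)‖ ≤ ((1 + ‖G‖)/(1 − θ))·‖d‖, where ‖G‖ denotes the operator (spectral) norm of G. -/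
open scoped RealInnerProductSpace

noncomputable section

/-- The proximity operator `prox_g(z)`. -/
noncomputable def proxPt {n : ℕ} (g : EuclideanSpace ℝ (Fin n) → ℝ)
    (z : EuclideanSpace ℝ (Fin n)) : EuclideanSpace ℝ (Fin n) :=
  Classical.epsilon fun p => ∀ y, g p + (1 / 2) * ‖p - z‖ ^ 2 ≤ g y + (1 / 2) * ‖y - z‖ ^ 2

/-!
A convex `φ` has a continuous affine minorant, so `φ + ‖· - z‖² / 2` is coercive and `prox_φ z`
exists; the first-order condition at the minimizer reads `z - prox_φ z ∈ ∂φ(prox_φ z)`.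
Here `r(x)` and `R(x̂)` are such residuals at the prox points `x - r(x)` and `x̂ - R(x̂)`, and
monotonicity of `∂φ` gives `⟪e + G d, d + e⟫ ≤ 0` for `e = r(x) - R(x̂)`. By coercivity of `G`,
`μ‖d‖² + ‖e‖² ≤ (1 + ‖G‖)‖d‖‖e‖`, so `μ‖d‖ ≤ (1 + ‖G‖)‖e‖` and `‖e‖ ≤ (1 + ‖G‖)‖d‖`; both
bounds follow since `(1 - θ)‖r(x)‖ ≤ ‖e‖ ≤ (1 + θ)‖r(x)‖`.
-/

open Filter Topology

section Prox

variable {E : Type*} [NormedAddCommGroup E] [NormedSpace ℝ E] [FiniteDimensional ℝ E]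

lemma ConvexOn.exists_affine_le {φ : E → ℝ} (hφ : ConvexOn ℝ Set.univ φ) :
    ∃ (l : E →L[ℝ] ℝ) (c : ℝ), ∀ y, l y + c ≤ φ y := by
  obtain ⟨l, c, hle, -⟩ := hφ.exists_affine_le_of_lt (𝕜 := ℝ) (Set.mem_univ 0)
    (sub_one_lt (φ 0)) isClosed_univ (hφ.continuousOn isOpen_univ).lowerSemicontinuousOn
  exact ⟨l, c, fun y => by simpa using hle ⟨y, Set.mem_univ y⟩⟩

lemma ConvexOn.exists_forall_add_half_sq_dist_le {φ : E → ℝ} (hφ : ConvexOn ℝ Set.univ φ)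
    (z : E) : ∃ p, ∀ y, φ p + 1 / 2 * ‖p - z‖ ^ 2 ≤ φ y + 1 / 2 * ‖y - z‖ ^ 2 := by
  have hcont : Continuous φ := continuousOn_univ.1 (hφ.continuousOn isOpen_univ)
  refine Continuous.exists_forall_le_of_isBounded (by fun_prop) z ?_
  obtain ⟨l, c, hlc⟩ := hφ.exists_affine_le
  -- The radius: on the sublevel set, `t = ‖y - z‖` satisfies `t ^ 2 / 2 ≤ K + ‖l‖ * t`.
  set K := φ z - l z - c
  refine (Metric.isBounded_closedBall (x := z) (r := 1 + 2 * |K| + 2 * ‖l‖)).subset fun y hy => ?_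
  have hy : φ y + 1 / 2 * ‖y - z‖ ^ 2 ≤ φ z := by simpa using hy
  have hl := l.le_opNorm (y - z)
  rw [Real.norm_eq_abs, map_sub] at hl
  rw [Metric.mem_closedBall, dist_eq_norm]
  nlinarith [hlc y, neg_abs_le (l y - l z), norm_nonneg (y - z), norm_nonneg l, le_abs_self K,
    abs_nonneg K]

end Prox

section Subdifferential

variable {E : Type*} [NormedAddCommGroup E] [InnerProductSpace ℝ E]

def subdifferential (φ : E → ℝ) (p : E) : Set E := {v | ∀ y, φ p + ⟪v, y - p⟫ ≤ φ y}

lemma subdifferential_monotone {φ : E → ℝ} {p q u v : E} (hu : u ∈ subdifferential φ p)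
    (hv : v ∈ subdifferential φ q) : 0 ≤ ⟪u - v, p - q⟫ := by
  have hq := hu q
  have hp := hv p
  rw [← neg_sub p q, inner_neg_right] at hq
  rw [inner_sub_left]
  linarith

lemma sub_mem_subdifferential_of_forall_add_half_sq_le {φ : E → ℝ}
    (hφ : ConvexOn ℝ Set.univ φ) {p z : E}
    (hp : ∀ y, φ p + 1 / 2 * ‖p - z‖ ^ 2 ≤ φ y + 1 / 2 * ‖y - z‖ ^ 2) :
    z - p ∈ subdifferential φ p := by
  intro y
  set A := φ y - φ p - ⟪z - p, y - p⟫
  -- Compare `p` with the point `p + t • (y - p)` of the segment `[p, y]`, then let `t → 0⁺`.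
  have hA : ∀ t ∈ Set.Ioc (0 : ℝ) 1, 0 ≤ A + t / 2 * ‖y - p‖ ^ 2 := by
    rintro t ⟨ht0, ht1⟩
    have hconv : φ (p + t • (y - p)) ≤ φ p + t * (φ y - φ p) := by
      rw [show p + t • (y - p) = (1 - t) • p + t • y by module]
      have := hφ.2 (Set.mem_univ p) (Set.mem_univ y) (sub_nonneg.2 ht1) ht0.le (by ring)
      simp only [smul_eq_mul] at this
      linarith
    have hnorm : ‖p + t • (y - p) - z‖ ^ 2
        = ‖p - z‖ ^ 2 - 2 * t * ⟪z - p, y - p⟫ + t ^ 2 * ‖y - p‖ ^ 2 := by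
      rw [show p + t • (y - p) - z = (p - z) + t • (y - p) by abel, norm_add_sq_real,
        real_inner_smul_right, norm_smul, Real.norm_eq_abs, abs_of_pos ht0,
        ← neg_sub z p, inner_neg_left]
      ring
    have hmin := hp (p + t • (y - p))
    rw [hnorm] at hmin
    nlinarith
  have hlim : Tendsto (fun t : ℝ => A + t / 2 * ‖y - p‖ ^ 2) (𝓝[>] 0) (𝓝 A) := by
    have : Continuous (fun t : ℝ => A + t / 2 * ‖y - p‖ ^ 2) := by fun_prop
    simpa using this.continuousWithinAt.tendsto (x := 0) (s := Set.Ioi 0)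
  have := ge_of_tendsto hlim (Filter.mem_of_superset (Ioc_mem_nhdsGT zero_lt_one) hA)
  linarith

lemma sq_add_sq_le_of_inner_add_nonpos (G : E →L[ℝ] E) {μ : ℝ}
    (hG : ∀ d, μ * ‖d‖ ^ 2 ≤ ⟪d, G d⟫) {d e : E} (h : ⟪e + G d, d + e⟫ ≤ 0) :
    μ * ‖d‖ ^ 2 + ‖e‖ ^ 2 ≤ (1 + ‖G‖) * ‖d‖ * ‖e‖ := by
  rw [inner_add_left, inner_add_right, inner_add_right, real_inner_self_eq_norm_sq,
    real_inner_comm d (G d)] at h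
  have hed := neg_le_of_abs_le (abs_real_inner_le_norm e d)
  have hGde := neg_le_of_abs_le (abs_real_inner_le_norm (G d) e)
  have hGd := mul_le_mul_of_nonneg_right (G.le_opNorm d) (norm_nonneg e)
  nlinarith [hG d]

end Subdifferential

lemma mul_le_mul_and_le_mul_of_mul_sq_add_sq_le {μ c a b : ℝ} (hμ : 0 ≤ μ) (hc : 0 ≤ c)
    (ha : 0 ≤ a) (hb : 0 ≤ b) (h : μ * a ^ 2 + b ^ 2 ≤ c * a * b) :
    μ * a ≤ c * b ∧ b ≤ c * a := by
  constructor
  · rcases ha.eq_or_lt with rfl | ha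
    · nlinarith
    · nlinarith
  · rcases hb.eq_or_lt with rfl | hb
    · nlinarith
    · nlinarith

lemma proxPt_spec {n : ℕ} {φ : EuclideanSpace ℝ (Fin n) → ℝ} (hφ : ConvexOn ℝ Set.univ φ)
    (z : EuclideanSpace ℝ (Fin n)) (y : EuclideanSpace ℝ (Fin n)) :
    φ (proxPt φ z) + 1 / 2 * ‖proxPt φ z - z‖ ^ 2 ≤ φ y + 1 / 2 * ‖y - z‖ ^ 2 :=
  Classical.epsilon_spec (hφ.exists_forall_add_half_sq_dist_le z) y

lemma sub_proxPt_mem_subdifferential {n : ℕ} {φ : EuclideanSpace ℝ (Fin n) → ℝ}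
    (hφ : ConvexOn ℝ Set.univ φ) (z : EuclideanSpace ℝ (Fin n)) :
    z - proxPt φ z ∈ subdifferential φ (proxPt φ z) :=
  sub_mem_subdifferential_of_forall_add_half_sq_le hφ (proxPt_spec hφ z)

theorem stmt_5_general {n : ℕ} (φ : EuclideanSpace ℝ (Fin n) → ℝ)
    (hφ : ConvexOn ℝ Set.univ φ)
    (x : EuclideanSpace ℝ (Fin n)) (gx : EuclideanSpace ℝ (Fin n))
    (G : EuclideanSpace ℝ (Fin n) →L[ℝ] EuclideanSpace ℝ (Fin n))
    (μ : ℝ) (hμ : 0 < μ) (hGcoer : ∀ d, μ * ‖d‖ ^ 2 ≤ ⟪d, G d⟫)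
    (xhat d : EuclideanSpace ℝ (Fin n)) (hd : d = xhat - x)
    (rx Rxhat : EuclideanSpace ℝ (Fin n))
    (hrx : rx = x - proxPt φ (x - gx))
    (hR : Rxhat = xhat - proxPt φ (xhat - gx - G d))
    (θ : ℝ) (hθ0 : 0 < θ) (hθ1 : θ < 1)
    (hin : ‖Rxhat‖ ≤ θ * ‖rx‖) :
    μ / ((1 + ‖G‖) * (1 + θ)) * ‖d‖ ≤ ‖rx‖ ∧ ‖rx‖ ≤ (1 + ‖G‖) / (1 - θ) * ‖d‖ := by
  have hmono := subdifferential_monotone (sub_proxPt_mem_subdifferential hφ (x - gx))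
    (sub_proxPt_mem_subdifferential hφ (xhat - gx - G d))
  set p := proxPt φ (x - gx)
  set q := proxPt φ (xhat - gx - G d)
  have hkey : ⟪rx - Rxhat + G d, d + (rx - Rxhat)⟫ ≤ 0 := by
    rw [show x - gx - p - (xhat - gx - G d - q) = rx - Rxhat + G d by rw [hrx, hR]; abel,
      show p - q = -(d + (rx - Rxhat)) by rw [hrx, hR, hd]; abel, inner_neg_right] at hmono
    linarith
  obtain ⟨hde, hed⟩ := mul_le_mul_and_le_mul_of_mul_sq_add_sq_le hμ.le (by positivity)
    (norm_nonneg d) (norm_nonneg (rx - Rxhat)) (sq_add_sq_le_of_inner_add_nonpos G hGcoer hkey)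
  have he_le : ‖rx - Rxhat‖ ≤ (1 + θ) * ‖rx‖ := by linarith [norm_sub_le rx Rxhat]
  have he_ge : (1 - θ) * ‖rx‖ ≤ ‖rx - Rxhat‖ := by linarith [norm_sub_norm_le rx Rxhat]
  constructor
  · rw [div_mul_eq_mul_div, div_le_iff₀ (by positivity)]
    calc μ * ‖d‖ ≤ (1 + ‖G‖) * ‖rx - Rxhat‖ := hde
      _ ≤ (1 + ‖G‖) * ((1 + θ) * ‖rx‖) := by gcongr
      _ = ‖rx‖ * ((1 + ‖G‖) * (1 + θ)) := by ring
  · rw [div_mul_eq_mul_div, le_div_iff₀ (by linarith)]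
    linarith

/-- If `‖R(x̂)‖ ≤ θ‖r(x)‖` with `θ ∈ (0,1)`, where `r(x) = x − prox_φ(x − ∇f(x))` and
`R(x̂) = x̂ − prox_φ(x̂ − ∇f(x) − G d)` with `d = x̂ − x` and `G` symmetric and `μ`-coercive,
then `(μ/((1+‖G‖)(1+θ)))‖d‖ ≤ ‖r(x)‖ ≤ ((1+‖G‖)/(1−θ))‖d‖`. -/
theorem stmt_5 {n : ℕ} (f φ : EuclideanSpace ℝ (Fin n) → ℝ)
    (hφ : ConvexOn ℝ Set.univ φ)
    (x : EuclideanSpace ℝ (Fin n)) (gx : EuclideanSpace ℝ (Fin n))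
    (hf : HasGradientAt f gx x)
    (G : EuclideanSpace ℝ (Fin n) →L[ℝ] EuclideanSpace ℝ (Fin n))
    (hGsym : ∀ u v, ⟪G u, v⟫ = ⟪u, G v⟫)
    (μ : ℝ) (hμ : 0 < μ) (hGcoer : ∀ d, μ * ‖d‖ ^ 2 ≤ ⟪d, G d⟫)
    (xhat d : EuclideanSpace ℝ (Fin n)) (hd : d = xhat - x)
    (rx Rxhat : EuclideanSpace ℝ (Fin n))
    (hrx : rx = x - proxPt φ (x - gx))
    (hR : Rxhat = xhat - proxPt φ (xhat - gx - G d))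
    (θ : ℝ) (hθ0 : 0 < θ) (hθ1 : θ < 1)
    (hin : ‖Rxhat‖ ≤ θ * ‖rx‖) :
    μ / ((1 + ‖G‖) * (1 + θ)) * ‖d‖ ≤ ‖rx‖ ∧ ‖rx‖ ≤ (1 + ‖G‖) / (1 - θ) * ‖d‖ :=
  stmt_5_general φ hφ x gx G μ hμ hGcoer xhat d hd rx Rxhat hrx hR θ hθ0 hθ1 hin
end
end

section
/- Let f : ℝⁿ → ℝ be twice continuously differentiable, φ : ℝⁿ → ℝ convex, F := f + φ. Fix x, x̂ ∈ ℝⁿ, d := x̂ − x, μ > 0 and a symmetric n×n matrix G such that G − ∇²f(x) ⪰ μI (positive semidefinite ordering). Define q(y) := f(x) + ⟨∇f(x), y − x⟩ + (1/2)⟨y − x, ∇²f(x)(y − x)⟩ + φ(y), q̂ likewise with G in place of ∇²f(x), pred := F(x) − q(x̂), ared := F(x) − F(x̂), and assume F(x) − q̂(x̂) ≥ 0. Then for every c ≤ 1 there exists a point ξ on the line segment between x and x̂ such that ared − c·pred ≥ (1/2)·((1 − c)μ − ‖∇²f(ξ) − ∇²f(x)‖)·‖d‖², where ‖·‖ is the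 operator norm on matrices. Moreover pred ≥ (F(x) − q̂(x̂)) + (μ/2)‖d‖² ≥ (μ/2)‖d‖². -/
open scoped RealInnerProductSpace

/-! The Lagrange form of Taylor's formula along the segment gives `ξ` with
`f(x̂) = f(x) + ⟨∇f(x), d⟩ + ½⟨∇²f(ξ) d, d⟩`, so `ared − pred = −½⟨(∇²f(ξ) − ∇²f(x)) d, d⟩`, which is
at least `−½‖∇²f(ξ) − ∇²f(x)‖‖d‖²`. Independently, `pred − (F(x) − q̂(x̂)) = ½⟨(G − ∇²f(x)) d, d⟩`,
which is at least `(μ/2)‖d‖²`. Writing `ared − c·pred = (ared − pred) + (1 − c)·pred` combines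
the two. -/

theorem taylor_mean_remainder_lagrange_two {g g' g'' : ℝ → ℝ} {a b : ℝ} (hab : a < b)
    (hg : ∀ t, HasDerivAt g (g' t) t) (hg' : ∀ t, HasDerivAt g' (g'' t) t) :
    ∃ t ∈ Set.Ioo a b, g b - g a - g' a * (b - a) = g'' t * (b - a) ^ 2 / 2 := by
  -- Cauchy's mean value theorem for `R t = g b - g t - g' t (b - t)` against `(b - t) ^ 2`.
  have hR : ∀ t, HasDerivAt (fun s => g b - g s - g' s * (b - s)) (-(g'' t * (b - t))) t := by
    intro t
    have hlin : HasDerivAt (fun s : ℝ => b - s) (-1) t := by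
      simpa using (hasDerivAt_id t).const_sub b
    exact (((hg t).const_sub (g b)).sub ((hg' t).mul hlin)).congr_deriv (by ring)
  have hK : ∀ t, HasDerivAt (fun s : ℝ => (b - s) ^ 2) (-(2 * (b - t))) t := by
    intro t
    have hlin : HasDerivAt (fun s : ℝ => b - s) (-1) t := by
      simpa using (hasDerivAt_id t).const_sub b
    exact (hlin.pow 2).congr_deriv (by ring)
  obtain ⟨t, ht, heq⟩ := exists_ratio_hasDerivAt_eq_ratio_slope _ _ hab
    (fun s _ => (hR s).continuousAt.continuousWithinAt) (fun s _ => hR s) _ _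
    (fun s _ => (hK s).continuousAt.continuousWithinAt) (fun s _ => hK s)
  refine ⟨t, ht, ?_⟩
  have hbt : b - t ≠ 0 := sub_ne_zero.mpr ht.2.ne'
  apply mul_right_cancel₀ hbt
  simp only [sub_self, mul_zero] at heq
  linear_combination (-1 / 2 : ℝ) * heq

section Gradient

variable {E : Type*} [NormedAddCommGroup E] [InnerProductSpace ℝ E] [CompleteSpace E]

theorem exists_mem_segment_taylor_gradient {f : E → ℝ} (hf : Differentiable ℝ f)
    {H : E → E →L[ℝ] E} (hH : ∀ y, HasFDerivAt (gradient f) (H y) y) (x y : E) :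
    ∃ ξ ∈ segment ℝ x y,
      f y - f x - ⟪gradient f x, y - x⟫ = 1 / 2 * ⟪H ξ (y - x), y - x⟫ := by
  have hL : ∀ t : ℝ, HasDerivAt (fun s : ℝ => x + s • (y - x)) (y - x) t := fun t => by
    simpa using ((hasDerivAt_id t).smul_const (y - x)).const_add x
  have hg : ∀ t : ℝ, HasDerivAt (fun s : ℝ => f (x + s • (y - x)))
      ⟪gradient f (x + t • (y - x)), y - x⟫ t := fun t => by
    simpa [Function.comp_def] using
      (hf _).hasGradientAt.hasFDerivAt.comp_hasDerivAt t (hL t)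
  have hg' : ∀ t : ℝ, HasDerivAt (fun s : ℝ => ⟪gradient f (x + s • (y - x)), y - x⟫)
      ⟪H (x + t • (y - x)) (y - x), y - x⟫ t := fun t => by
    simpa [Function.comp_def] using
      ((hH _).comp_hasDerivAt t (hL t)).inner ℝ (hasDerivAt_const t (y - x))
  obtain ⟨t, ht, heq⟩ := taylor_mean_remainder_lagrange_two zero_lt_one hg hg'
  refine ⟨x + t • (y - x), ?_, ?_⟩
  · rw [segment_eq_image']
    exact ⟨t, Set.Ioo_subset_Icc_self ht, rfl⟩
  · simp only [zero_smul, add_zero, one_smul, add_sub_cancel, sub_zero, one_pow, mul_one] at heq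
    linarith

end Gradient

theorem inner_apply_self_le_opNorm_mul_sq {E : Type*} [NormedAddCommGroup E]
    [InnerProductSpace ℝ E] (A : E →L[ℝ] E) (v : E) :
    ⟪A v, v⟫ ≤ ‖A‖ * ‖v‖ ^ 2 :=
  calc ⟪A v, v⟫ ≤ ‖A v‖ * ‖v‖ := real_inner_le_norm _ _
    _ ≤ ‖A‖ * ‖v‖ * ‖v‖ := by gcongr; exact A.le_opNorm v
    _ = ‖A‖ * ‖v‖ ^ 2 := by ring

theorem stmt_6_general {n : ℕ} (f φ : EuclideanSpace ℝ (Fin n) → ℝ)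
    (hf : ContDiff ℝ 2 f)
    (hess : EuclideanSpace ℝ (Fin n) → EuclideanSpace ℝ (Fin n) →L[ℝ] EuclideanSpace ℝ (Fin n))
    (hhess : ∀ y, HasFDerivAt (gradient f) (hess y) y)
    (F : EuclideanSpace ℝ (Fin n) → ℝ) (hF : ∀ y, F y = f y + φ y)
    (x xhat d : EuclideanSpace ℝ (Fin n)) (hd : d = xhat - x)
    (μ : ℝ)
    (G : EuclideanSpace ℝ (Fin n) →L[ℝ] EuclideanSpace ℝ (Fin n))
    (hGμ : ∀ u, μ * ‖u‖ ^ 2 ≤ ⟪(G - hess x) u, u⟫)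
    (q qhat : EuclideanSpace ℝ (Fin n) → ℝ)
    (hq : ∀ y, q y = f x + ⟪gradient f x, y - x⟫
        + (1 / 2) * ⟪y - x, hess x (y - x)⟫ + φ y)
    (hqhat : ∀ y, qhat y = f x + ⟪gradient f x, y - x⟫
        + (1 / 2) * ⟪y - x, G (y - x)⟫ + φ y)
    (pred ared : ℝ) (hpred : pred = F x - q xhat) (hared : ared = F x - F xhat)
    (hqhat0 : 0 ≤ F x - qhat xhat) :
    (∀ c ≤ (1 : ℝ), ∃ ξ ∈ segment ℝ x xhat,
        (1 / 2) * ((1 - c) * μ - ‖hess ξ - hess x‖) * ‖d‖ ^ 2 ≤ ared - c * pred) ∧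
    (F x - qhat xhat) + (μ / 2) * ‖d‖ ^ 2 ≤ pred ∧ (μ / 2) * ‖d‖ ^ 2 ≤ pred := by
  subst hd
  obtain ⟨ξ, hξ, htaylor⟩ :=
    exists_mem_segment_taylor_gradient (hf.differentiable two_ne_zero) hhess x xhat
  have hmodel : pred = (F x - qhat xhat) + 1 / 2 * ⟪(G - hess x) (xhat - x), xhat - x⟫ := by
    rw [sub_apply, inner_sub_left, real_inner_comm _ (G _),
      real_inner_comm _ (hess x _), hpred, hq, hqhat]
    ring
  have hactual : ared - pred = -(1 / 2) * ⟪(hess ξ - hess x) (xhat - x), xhat - x⟫ := by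
    rw [sub_apply, inner_sub_left, real_inner_comm _ (hess x _), hared, hpred,
      hq, hF, hF]
    linarith
  have hpred_ge : (F x - qhat xhat) + (μ / 2) * ‖xhat - x‖ ^ 2 ≤ pred := by
    linarith [hGμ (xhat - x)]
  have hpred_ge_sq : (μ / 2) * ‖xhat - x‖ ^ 2 ≤ pred := by linarith
  refine ⟨fun c hc => ⟨ξ, hξ, ?_⟩, hpred_ge, hpred_ge_sq⟩
  have hcurv := inner_apply_self_le_opNorm_mul_sq (hess ξ - hess x) (xhat - x)
  have hscaled := mul_le_mul_of_nonneg_left hpred_ge_sq (sub_nonneg.mpr hc)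
  linear_combination hscaled + (1 / 2 : ℝ) * hcurv - hactual

/-- Let `F = f + φ` with `f` twice continuously differentiable (Hessian `hess`), `φ` convex,
`G − ∇²f(x) ⪰ μI`, `q`/`q̂` the quadratic models with `∇²f(x)`/`G`, `pred = F(x) − q(x̂)`,
`ared = F(x) − F(x̂)`, and `F(x) − q̂(x̂) ≥ 0`. Then for every `c ≤ 1` there is `ξ` on the
segment `[x, x̂]` with `ared − c·pred ≥ (1/2)((1−c)μ − ‖∇²f(ξ) − ∇²f(x)‖)‖d‖²`; moreover
`pred ≥ (F(x) − q̂(x̂)) + (μ/2)‖d‖² ≥ (μ/2)‖d‖²`. -/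
theorem stmt_6 {n : ℕ} (f φ : EuclideanSpace ℝ (Fin n) → ℝ)
    (hf : ContDiff ℝ 2 f) (hφ : ConvexOn ℝ Set.univ φ)
    (hess : EuclideanSpace ℝ (Fin n) → EuclideanSpace ℝ (Fin n) →L[ℝ] EuclideanSpace ℝ (Fin n))
    (hhess : ∀ y, HasFDerivAt (gradient f) (hess y) y)
    (F : EuclideanSpace ℝ (Fin n) → ℝ) (hF : ∀ y, F y = f y + φ y)
    (x xhat d : EuclideanSpace ℝ (Fin n)) (hd : d = xhat - x)
    (μ : ℝ) (hμ : 0 < μ)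
    (G : EuclideanSpace ℝ (Fin n) →L[ℝ] EuclideanSpace ℝ (Fin n))
    (hGsym : ∀ u v, ⟪G u, v⟫ = ⟪u, G v⟫)
    (hGμ : ∀ u, μ * ‖u‖ ^ 2 ≤ ⟪(G - hess x) u, u⟫)
    (q qhat : EuclideanSpace ℝ (Fin n) → ℝ)
    (hq : ∀ y, q y = f x + ⟪gradient f x, y - x⟫
        + (1 / 2) * ⟪y - x, hess x (y - x)⟫ + φ y)
    (hqhat : ∀ y, qhat y = f x + ⟪gradient f x, y - x⟫
        + (1 / 2) * ⟪y - x, G (y - x)⟫ + φ y)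
    (pred ared : ℝ) (hpred : pred = F x - q xhat) (hared : ared = F x - F xhat)
    (hqhat0 : 0 ≤ F x - qhat xhat) :
    (∀ c ≤ (1 : ℝ), ∃ ξ ∈ segment ℝ x xhat,
        (1 / 2) * ((1 - c) * μ - ‖hess ξ - hess x‖) * ‖d‖ ^ 2 ≤ ared - c * pred) ∧
    (F x - qhat xhat) + (μ / 2) * ‖d‖ ^ 2 ≤ pred ∧ (μ / 2) * ‖d‖ ^ 2 ≤ pred :=
  stmt_6_general f φ hf hess hhess F hF x xhat d hd μ G hGμ q qhat hq hqhat pred ared hpred hared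
    hqhat0
end
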